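/- Let K be a field and n ≥ 2. For 0 ≤ k, s ≤ n−1 and nonnegative integers i, j, p, q, if (x^{n−k} y^k)^i · (x^{n−k−1} y^{k+1})^j = (x^{n−s} y^s)^p · (x^{n−s−1} y^{s+1})^q in K[x,y] (equivalently, (n−k)i + (n−k−1)j = (n−s)p + (n−s−1)q and ki + (k+1)j = sp + (s+1)q), then the monomials X_k^i X_{k+1}^j and X_s^p X_{s+1}^q in K[X_0,…,X_n] are equal. -/
import Mathlib


open MvPolynomial

/-- If `(x^{n-k} y^k)^i (x^{n-k-1} y^{k+1})^j = (x^{n-s} y^s)^p (x^{n-s-1} y^{s+1})^q`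
in `K[x,y]`, then the monomials `X_k^i X_{k+1}^j` and `X_s^p X_{s+1}^q` in `K[X₀,…,Xₙ]` coincide. -/
theorem veronese_monomials_inj (K : Type*) [Field K] (n : ℕ) (hn : 2 ≤ n)
    (k s : ℕ) (hk : k ≤ n - 1) (hs : s ≤ n - 1) (i j p q : ℕ)
    (h : (X 0 ^ (n - k) * X 1 ^ k : MvPolynomial (Fin 2) K) ^ i *
          (X 0 ^ (n - k - 1) * X 1 ^ (k + 1)) ^ j =
        (X 0 ^ (n - s) * X 1 ^ s) ^ p * (X 0 ^ (n - s - 1) * X 1 ^ (s + 1)) ^ q) :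
    (X (⟨k, by omega⟩ : Fin (n + 1)) ^ i * X ⟨k + 1, by omega⟩ ^ j : MvPolynomial (Fin (n + 1)) K)
      = X ⟨s, by omega⟩ ^ p * X ⟨s + 1, by omega⟩ ^ q := by
  simp only [mul_pow, ← pow_mul] at h
  simp only [X_pow_eq_monomial, monomial_mul, one_mul] at h
  have hd := monomial_left_injective (one_ne_zero (α := K)) h
  have h1 : (n - k) * i + (n - k - 1) * j = (n - s) * p + (n - s - 1) * q := by
    simpa using DFunLike.congr_fun hd 0
  have h2 : k * i + (k + 1) * j = s * p + (s + 1) * q := by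
    simpa using DFunLike.congr_fun hd 1
  obtain ⟨a, ha⟩ : ∃ a, n = a + k + 1 := ⟨n - k - 1, by omega⟩
  obtain ⟨b, hb⟩ : ∃ b, n = b + s + 1 := ⟨n - s - 1, by omega⟩
  rw [(by omega : n - k - 1 = a), (by omega : n - k = a + 1),
      (by omega : n - s - 1 = b), (by omega : n - s = b + 1)] at h1
  have h1' : ((a : ℤ) + 1) * i + a * j = ((b : ℤ) + 1) * p + b * q := by exact_mod_cast h1
  have h2' : (k : ℤ) * i + (k + 1) * j = s * p + (s + 1) * q := by exact_mod_cast h2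
  have hab : (b : ℤ) + s + 1 = a + k + 1 := by exact_mod_cast (by omega : b + s + 1 = a + k + 1)
  have ht : (i : ℤ) + j = p + q := by
    have hsum : ((b : ℤ) + s + 1) * ((i : ℤ) + j) = ((b : ℤ) + s + 1) * ((p : ℤ) + q) := by
      linear_combination h1' + h2' + ((i : ℤ) + j) * hab
    exact mul_left_cancel₀ (by positivity) hsum
  have htn : i + j = p + q := by exact_mod_cast ht
  have h3 : (k : ℤ) * (i + j) + j = s * (i + j) + q := by
    linear_combination h2' - (s : ℤ) * ht
  rcases lt_trichotomy k s with hks | hks | hks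
  · -- k < s
    have hks' : (k : ℤ) + 1 ≤ s := by exact_mod_cast hks
    have hprod : (0:ℤ) ≤ ((s:ℤ) - k - 1) * ((i:ℤ) + j) :=
      mul_nonneg (by linarith) (by positivity)
    have key : (i : ℤ) + j + q ≤ j := by linarith [h3, hprod]
    have hiq : i = 0 ∧ q = 0 := by omega
    obtain ⟨hi0, hq0⟩ := hiq
    subst hi0 hq0
    by_cases hj0 : j = 0
    · subst hj0
      have hp0 : p = 0 := by omega
      subst hp0; simp
    · have hjpos : (0 : ℤ) < j := by exact_mod_cast Nat.pos_of_ne_zero hj0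
      have hsk : (s : ℤ) * j = ((k : ℤ) + 1) * j := by linarith [h3]
      have hsk' : s = k + 1 := by
        have := mul_right_cancel₀ (ne_of_gt hjpos) hsk
        exact_mod_cast this
      have hpj : p = j := by omega
      subst hsk' hpj; simp
  · -- k = s
    subst hks
    have hjq : (j : ℤ) = q := by linarith [h3]
    have hjq' : j = q := by exact_mod_cast hjq
    have hip : i = p := by omega
    subst hjq' hip; rfl
  · -- s < k
    have hks' : (s : ℤ) + 1 ≤ k := by exact_mod_cast hks
    have hprod : (0:ℤ) ≤ ((k:ℤ) - s - 1) * ((i:ℤ) + j) :=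
      mul_nonneg (by linarith) (by positivity)
    have key : (p : ℤ) + q + j ≤ q := by linarith [h3, hprod, ht]
    have hiq : p = 0 ∧ j = 0 := by omega
    obtain ⟨hp0, hj0⟩ := hiq
    subst hp0 hj0
    by_cases hq0 : q = 0
    · subst hq0
      have hi0 : i = 0 := by omega
      subst hi0; simp
    · have hqpos : (0 : ℤ) < q := by exact_mod_cast Nat.pos_of_ne_zero hq0
      have hiq' : (i : ℤ) = q := by omega
      have hsk : (k : ℤ) * q = ((s : ℤ) + 1) * q := by
        linear_combination h3 - ((k:ℤ) - s) * hiq'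
      have hsk' : k = s + 1 := by
        have := mul_right_cancel₀ (ne_of_gt hqpos) hsk
        exact_mod_cast this
      have hiqn : i = q := by omega
      subst hsk' hiqn; simp
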